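/- (Urysohn's lemma for a-spaces.) Let A and B be disjoint closed subsets of an a-normal space X with denominator function ζ, and let α ≤ β be real numbers. Suppose that X ⊆ AC([α,β]), A ⊆ AC({α}), and B ⊆ AC({β}). Then there exists a continuous function f : X → [α,β] with den(f(x)) dividing ζ(x) for all x ∈ X, such that f(x) = α for all x ∈ A and f(x) = β for all x ∈ B. -/

import Mathlib

/-!
As in the classical proof of Urysohn's lemma, `f x` is the infimum of the rational levels
`t ∈ (α, β)` with `x ∈ V t`, where the open sets `V t` satisfy `closure (V t) ⊆ V u` for `t < u`
and are constructed one level at a time. Two further requirements make `f` an a-map: no point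
with `ζ z ≠ 0` lies on the boundary of a `V t`, and each such point has a height `v ∈ [α, β]` with
`den v ∣ ζ z` on the correct side of every level built so far.

When a level `r` is inserted, the points with `ζ z ≠ 0` between the neighbouring levels whose
denominator admits no height above `r` (resp. at most `r`) form a closed set: only finitely many
`d` admit no value with denominator dividing `d` in a given interval of positive length, and each
`{z | ζ z ∣ d}` is closed. Separating these two sets, together with the constraints inherited from
the other levels, by the closed-set version of (N3') (obtained by compactness) yields `V r`.
Finally, a point with `ζ z ≠ 0` has only finitely many admissible heights, so one of them is
consistent with all the levels, and `f z` equals it.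
-/

open Classical in
/-- The denominator of a real number: the reduced denominator if rational, `0` if irrational. -/
noncomputable def den (r : ℝ) : ℕ :=
  if h : ∃ q : ℚ, (q : ℝ) = r then h.choose.den else 0

/-- `AC ζ Λ`: the points of the a-space `(X, ζ)` that may be sent into `Λ ⊆ ℝ` by a
denominator-decreasing map. -/
def AC {X : Type*} (ζ : X → ℕ) (Λ : Set ℝ) : Set X := {x | ∃ l ∈ Λ, den l ∣ ζ x}

/-- An a-normal space structure on a topological space `X` with denominator function `ζ`. -/
def ANormal {X : Type*} [TopologicalSpace X] (ζ : X → ℕ) : Prop :=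
  CompactSpace X ∧ T2Space X ∧
  (∀ n : ℕ, IsClosed {x : X | ζ x ∣ n}) ∧
  ∀ x y : X, x ≠ y → ∃ U V : Set X, IsOpen U ∧ IsOpen V ∧ x ∈ U ∧ y ∈ V ∧
    Disjoint U V ∧ ∀ z ∈ (U ∪ V)ᶜ, ζ z = 0

open Set Filter Function Topology

theorem den_ratCast (q : ℚ) : den (q : ℝ) = q.den := by
  have h : ∃ p : ℚ, (p : ℝ) = q := ⟨q, rfl⟩
  rw [den, dif_pos h, Rat.cast_injective h.choose_spec]

theorem den_dvd_iff {d : ℕ} (hd : d ≠ 0) {r : ℝ} :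
    den r ∣ d ↔ ∃ j : ℤ, r = j / d := by
  constructor
  · intro hr
    by_cases hq : ∃ q : ℚ, (q : ℝ) = r
    · obtain ⟨q, rfl⟩ := hq
      obtain ⟨c, rfl⟩ := (den_ratCast q).symm ▸ hr
      have hc : (c : ℝ) ≠ 0 := by rintro h; simp_all
      refine ⟨q.num * c, ?_⟩
      push_cast
      rw [mul_div_mul_right _ _ hc, Rat.cast_def]
    · rw [den, dif_neg hq, zero_dvd_iff] at hr
      exact absurd hr hd
  · rintro ⟨j, rfl⟩
    have h := Rat.den_dvd j d
    rw [Rat.divInt_eq_div] at h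
    rw [show (j : ℝ) / d = ((j / d : ℚ) : ℝ) by push_cast; rfl, den_ratCast]
    exact_mod_cast h

theorem eventually_exists_den_dvd_mem_Ioc {a b : ℝ} (hab : a < b) :
    ∀ᶠ m : ℕ in atTop, ∃ v ∈ Ioc a b, den v ∣ m := by
  filter_upwards [eventually_gt_atTop 0,
    tendsto_one_div_atTop_nhds_zero_nat.eventually (gt_mem_nhds (sub_pos.2 hab))] with m hm hmab
  have hm' : (0 : ℝ) < m := by exact_mod_cast hm
  refine ⟨⌊b * m⌋ / m, ⟨?_, ?_⟩, (den_dvd_iff hm.ne').2 ⟨_, rfl⟩⟩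
  · rw [lt_div_iff₀ hm']
    rw [div_lt_iff₀ hm'] at hmab
    linarith [Int.sub_one_lt_floor (b * m)]
  · rw [div_le_iff₀ hm']
    exact Int.floor_le _

theorem finite_setOf_den_dvd {d : ℕ} (hd : d ≠ 0) (a b : ℝ) :
    {v | v ∈ Icc a b ∧ den v ∣ d}.Finite := by
  have hd' : (0 : ℝ) < d := by positivity
  refine ((finite_Icc ⌈a * d⌉ ⌊b * d⌋).image fun j : ℤ => (j : ℝ) / d).subset ?_
  rintro v ⟨⟨hav, hvb⟩, hv⟩
  obtain ⟨j, rfl⟩ := (den_dvd_iff hd).1 hv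
  refine ⟨j, ⟨?_, ?_⟩, rfl⟩
  · rw [Int.ceil_le]
    rwa [le_div_iff₀ hd'] at hav
  · rw [Int.le_floor]
    rwa [div_le_iff₀ hd'] at hvb

theorem AC_mono {X : Type*} {ζ : X → ℕ} {Λ Λ' : Set ℝ} (h : Λ ⊆ Λ') :
    AC ζ Λ ⊆ AC ζ Λ' :=
  fun _ ⟨l, hl, hdvd⟩ => ⟨l, h hl, hdvd⟩

theorem isClosed_setOf_ne_zero_and_notMem_AC {X : Type*} [TopologicalSpace X] {ζ : X → ℕ}
    (hζ : ∀ n, IsClosed {x | ζ x ∣ n}) {Λ : Set ℝ}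
    (hΛ : ∀ᶠ m in atTop, ∃ v ∈ Λ, den v ∣ m) :
    IsClosed {x | ζ x ≠ 0 ∧ x ∉ AC ζ Λ} := by
  obtain ⟨N, hN⟩ := eventually_atTop.1 hΛ
  set M := {m : ℕ | m ≠ 0 ∧ ¬∃ v ∈ Λ, den v ∣ m}
  have hM : M.Finite := (finite_lt_nat N).subset fun m hm => not_le.1 fun h => hm.2 (hN m h)
  convert hM.isClosed_biUnion fun m _ => hζ m using 1
  ext x
  simp only [mem_ofPred_eq, mem_iUnion, exists_prop]
  constructor
  · exact fun ⟨hx, hxΛ⟩ => ⟨ζ x, ⟨hx, hxΛ⟩, dvd_rfl⟩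
  · rintro ⟨m, ⟨hm, hmΛ⟩, hxm⟩
    exact ⟨fun hx => hm (zero_dvd_iff.1 (hx ▸ hxm)),
      fun ⟨v, hv, hvd⟩ => hmΛ ⟨v, hv, hvd.trans hxm⟩⟩

section ASeparated

variable {X : Type*} [TopologicalSpace X] {ζ : X → ℕ} {s s₁ s₂ t : Set X}

def ASeparated (ζ : X → ℕ) (s t : Set X) : Prop :=
  ∃ U V : Set X, IsOpen U ∧ IsOpen V ∧ s ⊆ U ∧ t ⊆ V ∧ Disjoint U V ∧
    ∀ z, ζ z ≠ 0 → z ∈ U ∪ V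

theorem ASeparated.symm (h : ASeparated ζ s t) : ASeparated ζ t s :=
  let ⟨U, V, hU, hV, hsU, htV, hUV, hcover⟩ := h
  ⟨V, U, hV, hU, htV, hsU, hUV.symm, fun z hz => union_comm U V ▸ hcover z hz⟩

theorem ASeparated.union_left (h₁ : ASeparated ζ s₁ t) (h₂ : ASeparated ζ s₂ t) :
    ASeparated ζ (s₁ ∪ s₂) t := by
  obtain ⟨U₁, V₁, hU₁, hV₁, hsU₁, htV₁, hUV₁, hcover₁⟩ := h₁
  obtain ⟨U₂, V₂, hU₂, hV₂, hsU₂, htV₂, hUV₂, hcover₂⟩ := h₂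
  refine ⟨U₁ ∪ U₂, V₁ ∩ V₂, hU₁.union hU₂, hV₁.inter hV₂, union_subset_union hsU₁ hsU₂,
    subset_inter htV₁ htV₂, ?_, fun z hz => ?_⟩
  · exact disjoint_union_left.2 ⟨hUV₁.mono_right inter_subset_left,
      hUV₂.mono_right inter_subset_right⟩
  · have := hcover₁ z hz
    have := hcover₂ z hz
    simp only [mem_union, mem_inter_iff] at *
    tauto

theorem ASeparated.of_isCompact_left (hs : IsCompact s) (h : ∀ x ∈ s, ASeparated ζ {x} t) :
    ASeparated ζ s t := by
  refine hs.induction_on ⟨∅, univ, isOpen_empty, isOpen_univ, subset_rfl, subset_univ t,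
    empty_disjoint _, fun z _ => Or.inr trivial⟩ ?_ (fun _ _ => union_left) fun x hx => ?_
  · exact fun s₁ s₂ hs ⟨U, V, hU, hV, hsU, htV, hUV, hcover⟩ =>
      ⟨U, V, hU, hV, hs.trans hsU, htV, hUV, hcover⟩
  · obtain ⟨U, V, hU, hV, hxU, htV, hUV, hcover⟩ := h x hx
    exact ⟨U, mem_nhdsWithin_of_mem_nhds (hU.mem_nhds (hxU rfl)),
      U, V, hU, hV, subset_rfl, htV, hUV, hcover⟩

theorem ANormal.aSeparated (hX : ANormal ζ) (hs : IsClosed s) (ht : IsClosed t)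
    (hst : Disjoint s t) : ASeparated ζ s t := by
  obtain ⟨_, -, -, hsep⟩ := hX
  refine .of_isCompact_left hs.isCompact fun x hx =>
    (ASeparated.of_isCompact_left ht.isCompact fun y hy => ?_).symm
  obtain ⟨U, V, hU, hV, hyU, hxV, hUV, hcover⟩ := hsep y x (hst.ne_of_mem hx hy).symm
  exact ⟨U, V, hU, hV, singleton_subset_iff.2 hyU, singleton_subset_iff.2 hxV, hUV,
    fun z hz => by_contra fun h => hz (hcover z h)⟩

end ASeparated

section LevelGap

variable {s : Set ℝ} {r : ℝ}

/-- For finite `s ∌ r` this is the gap `(max {t ∈ s | t < r}, min {t ∈ s | r < t}]` around `r`. -/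
def levelGap (s : Set ℝ) (r : ℝ) : Set ℝ := {v | ∀ t ∈ s, r < t ↔ v ≤ t}

theorem exists_Ioc_subset_levelGap (hs : s.Finite) (hrs : r ∉ s) :
    ∃ a < r, ∃ b > r, Ioc a b ⊆ levelGap s r := by
  obtain ⟨a, b, ⟨har, hrb⟩, hab⟩ :=
    mem_nhds_iff_exists_Ioo_subset.1 (hs.isClosed.isOpen_compl.mem_nhds hrs)
  refine ⟨a, har, b, hrb, fun v ⟨hav, hvb⟩ t ht => ?_⟩
  rcases le_or_gt t a with hta | hat
  · exact iff_of_false (hta.trans har.le).not_gt (hta.trans_lt hav).not_ge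
  · have hbt : b ≤ t := le_of_not_gt fun htb => hab ⟨hat, htb⟩ ht
    exact iff_of_true (hrb.trans_le hbt) (hvb.trans hbt)

theorem eventually_exists_den_dvd_mem_Ioc_inter_levelGap (hs : s.Finite) (hrs : r ∉ s)
    {a b : ℝ} (hab : a < b) (hr : r ∈ Icc a b) :
    ∀ᶠ m : ℕ in atTop, ∃ v ∈ Ioc a b ∩ levelGap s r, den v ∣ m := by
  obtain ⟨a', har, b', hrb, hgap⟩ := exists_Ioc_subset_levelGap hs hrs
  have : max a a' < min b b' := max_lt (lt_min hab (hr.1.trans_lt hrb))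
    (lt_min (har.trans_le hr.2) (har.trans hrb))
  filter_upwards [eventually_exists_den_dvd_mem_Ioc this] with m ⟨v, ⟨hav, hvb⟩, hvd⟩
  exact ⟨v, ⟨⟨(le_max_left _ _).trans_lt hav, hvb.trans (min_le_left _ _)⟩,
    hgap ⟨(le_max_right _ _).trans_lt hav, hvb.trans (min_le_right _ _)⟩⟩, hvd⟩

end LevelGap

section Family

variable {X : Type*} {ζ : X → ℕ} {A B : Set X} {α β r v : ℝ} {s : Set ℝ}
  {V W : ℝ → Set X} {P Q : Set X} {z : X}

def IsHeight (V : ℝ → Set X) (s : Set ℝ) (z : X) (v : ℝ) : Prop :=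
  ∀ t ∈ s, z ∈ V t ↔ v ≤ t

theorem isHeight_congr (h : EqOn V W s) : IsHeight V s z v ↔ IsHeight W s z v :=
  forall₂_congr fun t ht => by rw [h ht]

variable [TopologicalSpace X]

/-- `V t` plays the role of `{x | f x ≤ t}`, and the height `v` of `z` in `exists_isHeight` the
role of `f z`. -/
structure AUrysohnFamily (ζ : X → ℕ) (A B : Set X) (α β : ℝ) (s : Set ℝ)
    (V : ℝ → Set X) : Prop where
  isOpen : ∀ t ∈ s, IsOpen (V t)
  subset : ∀ t ∈ s, A ⊆ V t
  closure_subset_compl : ∀ t ∈ s, closure (V t) ⊆ Bᶜ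
  closure_subset : ∀ t ∈ s, ∀ u ∈ s, t < u → closure (V t) ⊆ V u
  mem_of_mem_closure : ∀ t ∈ s, ∀ z, ζ z ≠ 0 → z ∈ closure (V t) → z ∈ V t
  exists_isHeight : ∀ z, ζ z ≠ 0 → ∃ v ∈ Icc α β, den v ∣ ζ z ∧ IsHeight V s z v

def slab (V : ℝ → Set X) (s : Set ℝ) (r : ℝ) : Set X :=
  {z | (∀ t ∈ s, t < r → z ∉ V t) ∧ ∀ t ∈ s, r < t → z ∈ closure (V t)}

theorem isClosed_slab (hV : ∀ t ∈ s, IsOpen (V t)) : IsClosed (slab V s r) := by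
  have : slab V s r =
      (⋂ t ∈ s, ⋂ (_ : t < r), (V t)ᶜ) ∩ ⋂ t ∈ s, ⋂ (_ : r < t), closure (V t) := by
    ext z; simp [slab]
  rw [this]
  exact (isClosed_biInter fun t ht => isClosed_iInter fun _ => (hV t ht).isClosed_compl).inter
    (isClosed_biInter fun t _ => isClosed_iInter fun _ => isClosed_closure)

/- The points that the new level set at `r` must contain (`innerSet`), resp. keep away from its
closure (`outerSet`): besides those forced by `A`, `B` and the other levels, the points of the
slab around `r` that admit no height above `r`, resp. at most `r`. -/
def innerSet (ζ : X → ℕ) (A : Set X) (β : ℝ) (V : ℝ → Set X) (s : Set ℝ) (r : ℝ) :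
    Set X :=
  A ∪ (⋃ t ∈ {t ∈ s | t < r}, closure (V t)) ∪
    (slab V s r ∩ {z | ζ z ≠ 0 ∧ z ∉ AC ζ (Ioc r β ∩ levelGap s r)})

def outerSet (ζ : X → ℕ) (B : Set X) (α : ℝ) (V : ℝ → Set X) (s : Set ℝ) (r : ℝ) :
    Set X :=
  B ∪ (⋃ t ∈ {t ∈ s | r < t}, (V t)ᶜ) ∪
    (slab V s r ∩ {z | ζ z ≠ 0 ∧ z ∉ AC ζ (Icc α r ∩ levelGap s r)})

namespace AUrysohnFamily

theorem empty (hXac : ∀ x, x ∈ AC ζ (Icc α β)) : AUrysohnFamily ζ A B α β ∅ V where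
  isOpen := by simp
  subset := by simp
  closure_subset_compl := by simp
  closure_subset := by simp
  mem_of_mem_closure := by simp
  exists_isHeight z _ :=
    let ⟨l, hl, hdvd⟩ := hXac z
    ⟨l, hl, hdvd, fun _ ht => ht.elim⟩

theorem congr (h : AUrysohnFamily ζ A B α β s V) (hVW : EqOn V W s) :
    AUrysohnFamily ζ A B α β s W where
  isOpen t ht := hVW ht ▸ h.isOpen t ht
  subset t ht := hVW ht ▸ h.subset t ht
  closure_subset_compl t ht := hVW ht ▸ h.closure_subset_compl t ht
  closure_subset t ht u hu htu := hVW ht ▸ hVW hu ▸ h.closure_subset t ht u hu htu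
  mem_of_mem_closure t ht := hVW ht ▸ h.mem_of_mem_closure t ht
  exists_isHeight z hz :=
    let ⟨v, hv, hvd, hH⟩ := h.exists_isHeight z hz
    ⟨v, hv, hvd, (isHeight_congr hVW).1 hH⟩

theorem iUnion {S : ℕ → Set ℝ} (hS : Monotone S)
    (h : ∀ n, AUrysohnFamily ζ A B α β (S n) V) :
    AUrysohnFamily ζ A B α β (⋃ n, S n) V where
  isOpen t ht := let ⟨n, hn⟩ := mem_iUnion.1 ht; (h n).isOpen t hn
  subset t ht := let ⟨n, hn⟩ := mem_iUnion.1 ht; (h n).subset t hn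
  closure_subset_compl t ht := let ⟨n, hn⟩ := mem_iUnion.1 ht; (h n).closure_subset_compl t hn
  closure_subset t ht u hu := by
    obtain ⟨n, hn⟩ := mem_iUnion.1 ht
    obtain ⟨m, hm⟩ := mem_iUnion.1 hu
    exact (h (max n m)).closure_subset t (hS (le_max_left n m) hn) u (hS (le_max_right n m) hm)
  mem_of_mem_closure t ht := let ⟨n, hn⟩ := mem_iUnion.1 ht; (h n).mem_of_mem_closure t hn
  exists_isHeight z hz := by
    by_contra! hcon
    have hev : ∀ v ∈ {v | v ∈ Icc α β ∧ den v ∣ ζ z},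
        ∀ᶠ n in atTop, ¬IsHeight V (S n) z v := by
      rintro v ⟨hv, hvd⟩
      obtain ⟨t, ht, hnt⟩ : ∃ t ∈ ⋃ n, S n, ¬(z ∈ V t ↔ v ≤ t) := by
        simpa [IsHeight] using hcon v hv hvd
      obtain ⟨n, hn⟩ := mem_iUnion.1 ht
      exact eventually_atTop.2 ⟨n, fun m hm hH => hnt (hH t (hS hm hn))⟩
    obtain ⟨n, hn⟩ := ((finite_setOf_den_dvd hz α β).eventually_all.2 hev).exists
    obtain ⟨v, hv, hvd, hH⟩ := (h n).exists_isHeight z hz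
    exact hn v ⟨hv, hvd⟩ hH

theorem isHeight_iff_mem_levelGap (h : AUrysohnFamily ζ A B α β s V) (hrs : r ∉ s)
    (hz : z ∈ slab V s r) (hz0 : ζ z ≠ 0) : IsHeight V s z v ↔ v ∈ levelGap s r := by
  refine forall₂_congr fun t ht => ?_
  rcases lt_or_gt_of_ne (ne_of_mem_of_not_mem ht hrs) with htr | hrt
  · rw [iff_false_intro (hz.1 t ht htr), iff_false_intro htr.not_gt]
  · rw [iff_true_intro (h.mem_of_mem_closure t ht z hz0 (hz.2 t ht hrt)), iff_true_intro hrt]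

theorem isClosed_innerSet (h : AUrysohnFamily ζ A B α β s V)
    (hζ : ∀ n, IsClosed {x | ζ x ∣ n}) (hA : IsClosed A) (hs : s.Finite) (hr : r ∈ Ioo α β)
    (hrs : r ∉ s) : IsClosed (innerSet ζ A β V s r) :=
  (hA.union ((hs.subset (sep_subset _ _)).isClosed_biUnion fun _ _ => isClosed_closure)).union
    ((isClosed_slab h.isOpen).inter (isClosed_setOf_ne_zero_and_notMem_AC hζ
      (eventually_exists_den_dvd_mem_Ioc_inter_levelGap hs hrs hr.2 ⟨le_rfl, hr.2.le⟩)))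

theorem isClosed_outerSet (h : AUrysohnFamily ζ A B α β s V)
    (hζ : ∀ n, IsClosed {x | ζ x ∣ n}) (hB : IsClosed B) (hs : s.Finite) (hr : r ∈ Ioo α β)
    (hrs : r ∉ s) : IsClosed (outerSet ζ B α V s r) :=
  (hB.union ((hs.subset (sep_subset _ _)).isClosed_biUnion fun t ht =>
    (h.isOpen t ht.1).isClosed_compl)).union
    ((isClosed_slab h.isOpen).inter (isClosed_setOf_ne_zero_and_notMem_AC hζ
      ((eventually_exists_den_dvd_mem_Ioc_inter_levelGap hs hrs hr.1 ⟨hr.1.le, le_rfl⟩).mono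
        fun _ ⟨v, ⟨hv, hgap⟩, hvd⟩ => ⟨v, ⟨Ioc_subset_Icc_self hv, hgap⟩, hvd⟩)))

theorem disjoint_innerSet_outerSet (h : AUrysohnFamily ζ A B α β s V) (hAB : Disjoint A B)
    (hAα : A ⊆ AC ζ {α}) (hBβ : B ⊆ AC ζ {β}) (hr : r ∈ Ioo α β) (hrs : r ∉ s) :
    Disjoint (innerSet ζ A β V s r) (outerSet ζ B α V s r) := by
  rw [disjoint_left]
  rintro z ((hzA | hzlo) | ⟨hzK, hz0, hzhi⟩) ((hzB | hzhi') | ⟨hzK', hz0', hzlo'⟩)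
  · exact hAB.ne_of_mem hzA hzB rfl
  · obtain ⟨u, ⟨hu, -⟩, hzu⟩ := mem_iUnion₂.1 hzhi'
    exact hzu (h.subset u hu hzA)
  · have hα : α ∈ Icc α r ∩ levelGap s r := by
      refine ⟨⟨le_rfl, hr.1.le⟩, fun t ht => ⟨fun hrt => hr.1.le.trans hrt.le, fun _ => ?_⟩⟩
      refine (lt_or_gt_of_ne (ne_of_mem_of_not_mem ht hrs)).resolve_left fun htr => ?_
      exact hzK'.1 t ht htr (h.subset t ht hzA)
    exact hzlo' (AC_mono (singleton_subset_iff.2 hα) (hAα hzA))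
  · obtain ⟨t, ⟨ht, -⟩, hzt⟩ := mem_iUnion₂.1 hzlo
    exact h.closure_subset_compl t ht hzt hzB
  · obtain ⟨t, ⟨ht, htr⟩, hzt⟩ := mem_iUnion₂.1 hzlo
    obtain ⟨u, ⟨hu, hru⟩, hzu⟩ := mem_iUnion₂.1 hzhi'
    exact hzu (h.closure_subset t ht u hu (htr.trans hru) hzt)
  · obtain ⟨t, ⟨ht, htr⟩, hzt⟩ := mem_iUnion₂.1 hzlo
    exact hzK'.1 t ht htr (h.mem_of_mem_closure t ht z hz0' hzt)
  · have hβ : β ∈ Ioc r β ∩ levelGap s r :=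
      ⟨⟨hr.2, le_rfl⟩, fun t ht => ⟨fun hrt => absurd hzB
        (h.closure_subset_compl t ht (hzK.2 t ht hrt)), fun hβt => hr.2.trans_le hβt⟩⟩
    exact hzhi (AC_mono (singleton_subset_iff.2 hβ) (hBβ hzB))
  · obtain ⟨u, ⟨hu, hru⟩, hzu⟩ := mem_iUnion₂.1 hzhi'
    exact hzu (h.mem_of_mem_closure u hu z hz0 (hzK.2 u hu hru))
  · obtain ⟨v, hv, hvd, hH⟩ := h.exists_isHeight z hz0
    have hgap := (h.isHeight_iff_mem_levelGap hrs hzK hz0).1 hH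
    rcases le_or_gt v r with hvr | hrv
    · exact hzlo' ⟨v, ⟨⟨hv.1, hvr⟩, hgap⟩, hvd⟩
    · exact hzhi ⟨v, ⟨⟨hrv, hv.2⟩, hgap⟩, hvd⟩

theorem insert_update (h : AUrysohnFamily ζ A B α β s V) (hrs : r ∉ s) (hP : IsOpen P)
    (hAP : A ⊆ P) (hPB : closure P ⊆ Bᶜ) (hlo : ∀ t ∈ s, t < r → closure (V t) ⊆ P)
    (hhi : ∀ t ∈ s, r < t → closure P ⊆ V t)
    (hcl : ∀ z, ζ z ≠ 0 → z ∈ closure P → z ∈ P)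
    (hval : ∀ z, ζ z ≠ 0 →
      ∃ v ∈ Icc α β, den v ∣ ζ z ∧ IsHeight V s z v ∧ (z ∈ P ↔ v ≤ r)) :
    AUrysohnFamily ζ A B α β (insert r s) (update V r P) := by
  have hW : EqOn (update V r P) V s := fun t ht =>
    update_of_ne (ne_of_mem_of_not_mem ht hrs) _ _
  have h' := h.congr hW.symm
  refine ⟨forall_mem_insert.2 ⟨by rwa [update_self], h'.isOpen⟩,
    forall_mem_insert.2 ⟨by rwa [update_self], h'.subset⟩,
    forall_mem_insert.2 ⟨by rwa [update_self], h'.closure_subset_compl⟩, ?_,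
    forall_mem_insert.2 ⟨by rwa [update_self], h'.mem_of_mem_closure⟩, fun z hz => ?_⟩
  · rintro t (rfl | ht) u (rfl | hu) htu
    · exact (lt_irrefl _ htu).elim
    · rw [update_self, hW hu]; exact hhi u hu htu
    · rw [update_self, hW ht]; exact hlo t ht htu
    · exact h'.closure_subset t ht u hu htu
  · obtain ⟨v, hv, hvd, hH, hPv⟩ := hval z hz
    exact ⟨v, hv, hvd,
      forall_mem_insert.2 ⟨by rwa [update_self], (isHeight_congr hW.symm).1 hH⟩⟩

theorem exists_isHeight_insert (h : AUrysohnFamily ζ A B α β s V) (hr : r ∈ Ioo α β)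
    (hrs : r ∉ s) (hinP : innerSet ζ A β V s r ⊆ P) (houtQ : outerSet ζ B α V s r ⊆ Q)
    (hPQ : Disjoint P Q) (z : X) (hz : ζ z ≠ 0) :
    ∃ v ∈ Icc α β, den v ∣ ζ z ∧ IsHeight V s z v ∧ (z ∈ P ↔ v ≤ r) := by
  by_cases hzK : z ∈ slab V s r
  · have hH := fun v => h.isHeight_iff_mem_levelGap (v := v) hrs hzK hz
    by_cases hzP : z ∈ P
    · obtain ⟨v, ⟨⟨hαv, hvr⟩, hgap⟩, hvd⟩ : z ∈ AC ζ (Icc α r ∩ levelGap s r) :=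
        by_contra fun hn => hPQ.ne_of_mem hzP (houtQ (Or.inr ⟨hzK, hz, hn⟩)) rfl
      exact ⟨v, ⟨hαv, hvr.trans hr.2.le⟩, hvd, (hH v).2 hgap, iff_of_true hzP hvr⟩
    · obtain ⟨v, ⟨⟨hrv, hvβ⟩, hgap⟩, hvd⟩ : z ∈ AC ζ (Ioc r β ∩ levelGap s r) :=
        by_contra fun hn => hzP (hinP (Or.inr ⟨hzK, hz, hn⟩))
      exact ⟨v, ⟨hr.1.le.trans hrv.le, hvβ⟩, hvd, (hH v).2 hgap,
        iff_of_false hzP hrv.not_ge⟩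
  obtain ⟨v, hv, hvd, hH⟩ := h.exists_isHeight z hz
  refine ⟨v, hv, hvd, hH, ?_⟩
  simp only [slab, mem_ofPred_eq, not_and_or, not_forall, not_not, exists_prop] at hzK
  rcases hzK with ⟨t, ht, htr, hzt⟩ | ⟨t, ht, hrt, hzt⟩
  · exact iff_of_true (hinP (Or.inl (Or.inr (mem_biUnion ⟨ht, htr⟩ (subset_closure hzt)))))
      (((hH t ht).1 hzt).trans htr.le)
  · have hzt' : z ∉ V t := fun h => hzt (subset_closure h)
    refine iff_of_false (fun hzP => hPQ.ne_of_mem hzP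
      (houtQ (Or.inl (Or.inr (mem_biUnion ⟨ht, hrt⟩ hzt')))) rfl) fun hvr => ?_
    exact hzt' ((hH t ht).2 (hvr.trans hrt.le))

theorem exists_insert (hX : ANormal ζ) (hA : IsClosed A) (hB : IsClosed B)
    (hAB : Disjoint A B) (hAα : A ⊆ AC ζ {α}) (hBβ : B ⊆ AC ζ {β})
    (h : AUrysohnFamily ζ A B α β s V) (hs : s.Finite) (hr : r ∈ Ioo α β) :
    ∃ W, EqOn W V s ∧ AUrysohnFamily ζ A B α β (insert r s) W := by
  by_cases hrs : r ∈ s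
  · exact ⟨V, eqOn_refl V s, by rwa [insert_eq_of_mem hrs]⟩
  obtain ⟨P, Q, hP, hQ, hinP, houtQ, hPQ, hcover⟩ := hX.aSeparated
    (h.isClosed_innerSet hX.2.2.1 hA hs hr hrs) (h.isClosed_outerSet hX.2.2.1 hB hs hr hrs)
    (h.disjoint_innerSet_outerSet hAB hAα hBβ hr hrs)
  have hPQ' : closure P ⊆ Qᶜ := closure_minimal hPQ.subset_compl_right hQ.isClosed_compl
  refine ⟨update V r P, fun t ht => update_of_ne (ne_of_mem_of_not_mem ht hrs) _ _,
    h.insert_update hrs hP (fun x hx => hinP (Or.inl (Or.inl hx)))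
      (fun x hx hxB => hPQ' hx (houtQ (Or.inl (Or.inl hxB))))
      (fun t ht htr x hx => hinP (Or.inl (Or.inr (mem_biUnion ⟨ht, htr⟩ hx))))
      (fun t ht hrt x hx => by_contra fun hxt =>
        hPQ' hx (houtQ (Or.inl (Or.inr (mem_biUnion ⟨ht, hrt⟩ hxt)))))
      (fun z hz hzP => (hcover z hz).resolve_right (hPQ' hzP))
      (h.exists_isHeight_insert hr hrs hinP houtQ hPQ)⟩

end AUrysohnFamily

end Family

theorem exists_forall_of_forall_exists_eqOn {ι γ : Type*} {S : ℕ → Set ι} (hS : Monotone S)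
    {P : Set ι → (ι → γ) → Prop} (hP : ∀ {s W W'}, EqOn W W' s → P s W → P s W')
    (h₀ : ∃ W, P (S 0) W)
    (hstep : ∀ n W, P (S n) W → ∃ W', EqOn W' W (S n) ∧ P (S (n + 1)) W') :
    ∃ W, ∀ n, P (S n) W := by
  obtain ⟨W₀, hW₀⟩ := h₀
  have : Nonempty (ι → γ) := ⟨W₀⟩
  choose! next hnext_eqOn hnext using hstep
  let F : ℕ → ι → γ := fun n => Nat.rec (motive := fun _ => ι → γ) W₀ next n
  have hF : ∀ n, P (S n) (F n) := fun n => Nat.rec hW₀ (fun n ih => hnext n _ ih) n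
  have hcoh : ∀ {m n}, m ≤ n → EqOn (F n) (F m) (S m) := by
    intro m n hmn
    induction hmn with
    | refl => exact eqOn_refl _ _
    | step hmn ih => exact ((hnext_eqOn _ _ (hF _)).mono (hS hmn)).trans ih
  classical
  -- the value at `t` is frozen from the first stage whose index set contains `t`
  let N : ι → ℕ := fun t => if h : ∃ n, t ∈ S n then Nat.find h else 0
  refine ⟨fun t => F (N t) t, fun n => hP (fun t ht => ?_) (hF n)⟩
  have hex : ∃ n, t ∈ S n := ⟨n, ht⟩
  simp only [N, dif_pos hex]
  exact hcoh (Nat.find_min' hex ht) (Nat.find_spec hex)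

theorem exists_aUrysohnFamily {X : Type*} [TopologicalSpace X] {ζ : X → ℕ} (hX : ANormal ζ)
    {A B : Set X} (hA : IsClosed A) (hB : IsClosed B) (hAB : Disjoint A B) {α β : ℝ}
    (hXac : ∀ x, x ∈ AC ζ (Icc α β)) (hAα : A ⊆ AC ζ {α}) (hBβ : B ⊆ AC ζ {β})
    {D : Set ℝ} (hDc : D.Countable) (hD : D ⊆ Ioo α β) :
    ∃ V, AUrysohnFamily ζ A B α β D V := by
  rcases D.eq_empty_or_nonempty with rfl | hne
  · exact ⟨fun _ => ∅, .empty hXac⟩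
  obtain ⟨q, rfl⟩ := hDc.exists_eq_range hne
  have hS : Monotone fun n => q '' Iio n := fun m n hmn => image_mono (Iio_subset_Iio hmn)
  obtain ⟨V, hV⟩ := exists_forall_of_forall_exists_eqOn hS (P := AUrysohnFamily ζ A B α β)
    (fun hVW h => h.congr hVW) ⟨fun _ => ∅, by simpa using AUrysohnFamily.empty hXac⟩
    fun n V hV => by
      rw [← Order.succ_eq_add_one, Order.Iio_succ_eq_insert, image_insert_eq]
      exact hV.exists_insert hX hA hB hAB hAα hBβ ((finite_Iio n).image q)
        (hD (mem_range_self n))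
  exact ⟨V, by simpa [← image_iUnion] using AUrysohnFamily.iUnion hS hV⟩

section LevelInf

variable {X : Type*} {D : Set ℝ} {V : ℝ → Set X} {α β v : ℝ} {x : X}

noncomputable def levelInf (D : Set ℝ) (V : ℝ → Set X) (β : ℝ) (x : X) : ℝ :=
  sInf (insert β {t ∈ D | x ∈ V t})

theorem levelInf_le_right (hD : BddBelow D) : levelInf D V β x ≤ β :=
  csInf_le ((hD.mono (sep_subset _ _)).insert β) (mem_insert _ _)

theorem levelInf_le {t : ℝ} (hD : BddBelow D) (ht : t ∈ D) (hx : x ∈ V t) :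
    levelInf D V β x ≤ t :=
  csInf_le ((hD.mono (sep_subset _ _)).insert β) (mem_insert_of_mem _ ⟨ht, hx⟩)

theorem le_levelInf (hαβ : α ≤ β) (hD : ∀ t ∈ D, α ≤ t) : α ≤ levelInf D V β x :=
  le_csInf (insert_nonempty _ _) (forall_mem_insert.2 ⟨hαβ, fun t ht => hD t ht.1⟩)

theorem levelInf_eq (hD : BddBelow D)
    (hdense : ∀ a b, α ≤ a → a < b → b ≤ β → ∃ t ∈ D, t ∈ Ioo a b)
    (hv : v ∈ Icc α β) (h : IsHeight V D x v) : levelInf D V β x = v := by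
  refine le_antisymm ?_ (le_csInf (insert_nonempty _ _) (forall_mem_insert.2
    ⟨hv.2, fun t ⟨ht, hxt⟩ => (h t ht).1 hxt⟩))
  rcases hv.2.eq_or_lt with rfl | hvβ
  · exact levelInf_le_right hD
  refine le_of_forall_gt_imp_ge_of_dense fun c hvc => ?_
  obtain ⟨t, ht, hvt, htc⟩ := hdense v (min c β) hv.1 (lt_min hvc hvβ) (min_le_right c β)
  exact (levelInf_le hD ht ((h t ht).2 hvt.le)).trans (htc.le.trans (min_le_left c β))

variable [TopologicalSpace X]

theorem isOpen_levelInf_preimage_Iio (hD : BddBelow D) (hV : ∀ t ∈ D, IsOpen (V t)) (c : ℝ) :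
    IsOpen (levelInf D V β ⁻¹' Iio c) := by
  refine isOpen_iff_forall_mem_open.2 fun x hx => ?_
  obtain ⟨u, hu, huc⟩ := exists_lt_of_csInf_lt (s := insert β {t ∈ D | x ∈ V t})
    (insert_nonempty _ _) hx
  rcases hu with rfl | ⟨hu, hxu⟩
  · exact ⟨univ, fun y _ => (levelInf_le_right hD).trans_lt huc, isOpen_univ, mem_univ x⟩
  · exact ⟨V u, fun y hy => (levelInf_le hD hu hy).trans_lt huc, hV u hu, hxu⟩

theorem isOpen_levelInf_preimage_Ioi (hαβ : α ≤ β) (hD : D ⊆ Ioo α β)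
    (hdense : ∀ a b, α ≤ a → a < b → b ≤ β → ∃ t ∈ D, t ∈ Ioo a b)
    (hmono : ∀ t ∈ D, ∀ u ∈ D, t < u → closure (V t) ⊆ V u) (c : ℝ) :
    IsOpen (levelInf D V β ⁻¹' Ioi c) := by
  have hDbdd : BddBelow D := ⟨α, fun _ ht => (hD ht).1.le⟩
  refine isOpen_iff_forall_mem_open.2 fun x hx => ?_
  rcases lt_or_ge c α with hcα | hαc
  · exact ⟨univ, fun y _ => hcα.trans_le (le_levelInf hαβ fun _ ht => (hD ht).1.le),
      isOpen_univ, mem_univ x⟩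
  obtain ⟨t, ht, hct, htx⟩ := hdense c _ hαc hx (levelInf_le_right hDbdd)
  obtain ⟨t', ht', htt', ht'x⟩ := hdense t _ (hD ht).1.le htx (levelInf_le_right hDbdd)
  refine ⟨(closure (V t))ᶜ, fun y hy => hct.trans_le ?_, isClosed_closure.isOpen_compl,
    fun hxt => (levelInf_le hDbdd ht' (hmono t ht t' ht' htt' hxt)).not_gt ht'x⟩
  refine le_csInf (insert_nonempty _ _) (forall_mem_insert.2 ⟨(hD ht).2.le, ?_⟩)
  exact fun u ⟨hu, hyu⟩ => le_of_not_gt fun hut =>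
    hy (subset_closure (hmono u hu t ht hut (subset_closure hyu)))

theorem continuous_levelInf (hαβ : α ≤ β) (hD : D ⊆ Ioo α β)
    (hdense : ∀ a b, α ≤ a → a < b → b ≤ β → ∃ t ∈ D, t ∈ Ioo a b)
    (hV : ∀ t ∈ D, IsOpen (V t)) (hmono : ∀ t ∈ D, ∀ u ∈ D, t < u → closure (V t) ⊆ V u) :
    Continuous (levelInf D V β) :=
  OrderTopology.continuous_iff.2 fun c =>
    ⟨isOpen_levelInf_preimage_Ioi hαβ hD hdense hmono c,
      isOpen_levelInf_preimage_Iio ⟨α, fun _ ht => (hD ht).1.le⟩ hV c⟩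

end LevelInf

/-- **Urysohn's lemma for a-spaces.** If `A`, `B` are disjoint closed
subsets of an a-normal space `X` with `X ⊆ AC [α,β]`, `A ⊆ AC {α}`, `B ⊆ AC {β}`, then
there is an a-map `f : X → [α,β]` with `f ≡ α` on `A` and `f ≡ β` on `B`. -/
theorem urysohn_for_aspaces
    {X : Type*} [TopologicalSpace X] (ζ : X → ℕ) (hX : ANormal ζ)
    (A B : Set X) (hA : IsClosed A) (hB : IsClosed B) (hAB : Disjoint A B)
    (α β : ℝ) (hαβ : α ≤ β)
    (hXac : ∀ x : X, x ∈ AC ζ (Set.Icc α β))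
    (hAac : A ⊆ AC ζ {α}) (hBac : B ⊆ AC ζ {β}) :
    ∃ f : X → ℝ, Continuous f ∧ (∀ x, f x ∈ Set.Icc α β) ∧
      (∀ x, den (f x) ∣ ζ x) ∧ (∀ x ∈ A, f x = α) ∧ (∀ x ∈ B, f x = β) := by
  set D := range ((↑) : ℚ → ℝ) ∩ Ioo α β
  have hD : D ⊆ Ioo α β := inter_subset_right
  have hDbdd : BddBelow D := ⟨α, fun _ ht => (hD ht).1.le⟩
  have hdense : ∀ a b, α ≤ a → a < b → b ≤ β → ∃ t ∈ D, t ∈ Ioo a b := fun a b ha hab hb =>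
    let ⟨q, hq⟩ := exists_rat_btwn hab
    ⟨q, ⟨mem_range_self q, ha.trans_lt hq.1, hq.2.trans_le hb⟩, hq⟩
  obtain ⟨V, hV⟩ := exists_aUrysohnFamily hX hA hB hAB hXac hAac hBac
    ((countable_range _).mono inter_subset_left) hD
  refine ⟨levelInf D V β, continuous_levelInf hαβ hD hdense hV.isOpen hV.closure_subset,
    fun x => ⟨le_levelInf hαβ fun _ ht => (hD ht).1.le, levelInf_le_right hDbdd⟩,
    fun x => ?_, fun x hx => ?_, fun x hx => ?_⟩
  · rcases eq_or_ne (ζ x) 0 with hx | hx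
    · simp [hx]
    obtain ⟨v, hv, hvd, hH⟩ := hV.exists_isHeight x hx
    rwa [levelInf_eq hDbdd hdense hv hH]
  · exact levelInf_eq hDbdd hdense ⟨le_rfl, hαβ⟩ fun t ht =>
      iff_of_true (hV.subset t ht hx) (hD ht).1.le
  · exact levelInf_eq hDbdd hdense ⟨hαβ, le_rfl⟩ fun t ht => iff_of_false
      (fun hxt => hV.closure_subset_compl t ht (subset_closure hxt) hx) (hD ht).2.not_ge
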